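/- arXiv:2504.19233 — 2 statements merged into one kernel-verified Lean document; each statement's English description precedes it below -/
import Mathlib

section
/- The determinant of the n×n matrix Σ̃ with entries Σ̃_{ij} = e^{-φ|t_i - t_j|}, for t_1 < … < t_n, equals ∏_{i=1}^{n-1} (1 - e^{-2φ(t_{i+1} - t_i)}), which is strictly positive. -/
open Real Matrix Finset

lemma OU_det_aux (φ : ℝ) :
    ∀ (n : ℕ) (t : Fin (n + 1) → ℝ), StrictMono t →
    (Matrix.of fun i j => Real.exp (-φ * |t i - t j|)).det =
      ∏ i : Fin n, (1 - Real.exp (-2 * φ * (t i.succ - t i.castSucc))) := by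
  intro n
  induction n with
  | zero =>
    intro t ht
    simp [Matrix.det_fin_one]
  | succ n ih =>
    intro t ht
    set M : Matrix (Fin (n + 2)) (Fin (n + 2)) ℝ :=
      Matrix.of (fun i j => Real.exp (-φ * |t i - t j|)) with hM
    set l : Fin (n + 2) := Fin.last (n + 1) with hl
    set p : Fin (n + 2) := (Fin.last n).castSucc with hp
    have hpl : p ≠ l := by simp [hp, hl, Fin.ext_iff]
    have htp : t p ≤ t l := (ht (by simp [hp, hl, Fin.lt_iff_val_lt_val])).le
    set ρ : ℝ := Real.exp (-φ * (t l - t p)) with hρ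
    have hrow : M.det = (M.updateRow l (M l + (-ρ) • M p)).det :=
      (Matrix.det_updateRow_add_smul_self M hpl.symm (-ρ)).symm
    have hnew : M l + (-ρ) • M p = Pi.single l (1 - ρ * ρ) := by
      funext j
      by_cases hj : j = l
      · rw [hj]
        have h1 : M l l = 1 := by simp [hM]
        have h2 : M p l = ρ := by
          simp only [hM, Matrix.of_apply, hρ]
          rw [abs_sub_comm, abs_of_nonneg (by linarith)]
        simp only [Pi.add_apply, Pi.smul_apply, smul_eq_mul, h1, h2, Pi.single_eq_same]
        ring
      · have hjle : t j ≤ t p := by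
          apply ht.monotone
          simp only [hp, Fin.le_iff_val_le_val, Fin.coe_castSucc, Fin.val_last]
          have := Fin.val_lt_last hj
          replace this : (j : ℕ) < n + 1 := by simpa [hl, Fin.lt_iff_val_lt_val] using this
          omega
        have h1 : M l j = Real.exp (-φ * (t l - t j)) := by
          simp only [hM, Matrix.of_apply]
          rw [abs_of_nonneg (by linarith)]
        have h2 : M p j = Real.exp (-φ * (t p - t j)) := by
          simp only [hM, Matrix.of_apply]
          rw [abs_of_nonneg (by linarith)]
        simp only [Pi.add_apply, Pi.smul_apply, smul_eq_mul, h1, h2, hρ,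
          Pi.single_eq_of_ne hj]
        have e1 : -Real.exp (-φ * (t l - t p)) * Real.exp (-φ * (t p - t j))
            = -(Real.exp (-φ * (t l - t p)) * Real.exp (-φ * (t p - t j))) := by ring
        rw [e1, ← Real.exp_add]
        have e2 : -φ * (t l - t p) + -φ * (t p - t j) = -(φ * (t l - t j)) := by ring
        rw [e2]
        ring_nf
    rw [hrow, hnew]
    rw [Matrix.det_succ_row _ l]
    rw [Finset.sum_eq_single l]
    · have hmm : ((M.updateRow l (Pi.single l (1 - ρ * ρ))).submatrix l.succAbove l.succAbove)
          = Matrix.of (fun i j => Real.exp (-φ * |(t ∘ Fin.castSucc) i - (t ∘ Fin.castSucc) j|)) := by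
        ext i j
        have hne : (i.castSucc : Fin (n + 2)) ≠ l := (Fin.castSucc_lt_last i).ne
        simp only [Matrix.submatrix_apply, hl, Fin.succAbove_last]
        rw [Matrix.updateRow_ne (by rw [← hl] at *; exact hne)]
        simp [hM]
      rw [hmm, ih (t ∘ Fin.castSucc) (ht.comp Fin.strictMono_castSucc)]
      rw [Fin.prod_univ_castSucc]
      have hsign : ((-1 : ℝ)) ^ ((l : ℕ) + (l : ℕ)) = 1 := by
        rw [← two_mul, pow_mul]; norm_num
      rw [Matrix.updateRow_self, Pi.single_eq_same, hsign, one_mul]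
      have hρρ : ρ * ρ = Real.exp (-2 * φ * (t l - t p)) := by
        rw [hρ, ← Real.exp_add]; ring_nf
      have hls : (Fin.last n).succ = l := rfl
      have hlp : (Fin.last n).castSucc = p := rfl
      have hPP : (∏ i : Fin n, (1 - Real.exp (-2 * φ *
            ((t ∘ Fin.castSucc) i.succ - (t ∘ Fin.castSucc) i.castSucc)))) =
          ∏ i : Fin n, (1 - Real.exp (-2 * φ * (t (i.castSucc).succ - t (i.castSucc).castSucc))) := by
        refine Finset.prod_congr rfl fun i _ => ?_
        rw [Function.comp_apply, Function.comp_apply, Fin.succ_castSucc]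
      rw [hPP, hρρ, hls, hlp]
      ring
    · intro b _ hb
      simp [Matrix.updateRow_self, Pi.single_eq_of_ne hb]
    · simp

/-- The determinant of the `n×n` matrix `Σ̃_{ij} = e^{-φ|t_i - t_j|}` for strictly increasing
times `t_1 < … < t_n` (`n = m + 2 ≥ 2`) equals `∏_{i=1}^{n-1} (1 - e^{-2φ(t_{i+1}-t_i)})`,
which is strictly positive. -/
theorem OU_correlation_matrix_det
    (m : ℕ) (t : Fin (m + 2) → ℝ) (ht : StrictMono t) (φ : ℝ) (hφ : 0 < φ)
    (S : Matrix (Fin (m + 2)) (Fin (m + 2)) ℝ)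
    (hS : ∀ i j, S i j = Real.exp (-φ * |t i - t j|)) :
    S.det = (∏ i : Fin (m + 1), (1 - Real.exp (-2 * φ * (t i.succ - t i.castSucc)))) ∧
    0 < S.det := by
  have hSeq : S = Matrix.of (fun i j => Real.exp (-φ * |t i - t j|)) := by
    ext i j; rw [hS]; rfl
  have hdet : S.det = ∏ i : Fin (m + 1), (1 - Real.exp (-2 * φ * (t i.succ - t i.castSucc))) := by
    rw [hSeq]; exact OU_det_aux φ (m + 1) t ht
  refine ⟨hdet, ?_⟩
  rw [hdet]
  apply Finset.prod_pos
  intro i _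
  have hlt : t i.castSucc < t i.succ := ht Fin.castSucc_lt_succ
  have : Real.exp (-2 * φ * (t i.succ - t i.castSucc)) < 1 := by
    rw [← Real.exp_zero]
    apply Real.exp_lt_exp.mpr
    nlinarith
  linarith
end

section
/- The sum over observation times of the n-dimensional Gaussian transition log-densities of the stationary OU process equals the multivariate Gaussian log-density -(n/2)log(2π) - (1/2)log det Σ - (1/2)εᵀΣ⁻¹ε, where Σ_{ij} = (σ²/(2φ))e^{-φ|t_i - t_j|}. Equivalently, -(n/2)log(πσ²/φ) - (1/2)Σ_{i=1}^{n-1} log(1 - e^{-2φΔ_i}) - (φ/σ²)ε_1² - (φ/σ²)Σ_{i=1}^{n-1}(ε_{i+1} - ε_i e^{-φΔ_i})²/(1 - e^{-2φΔ_i}) = -(n/2)log(2π) - (1/2)log det Σ - (1/2)εᵀΣ⁻¹ε for all ε ∈ ℝⁿ. -/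
open Real Matrix Finset

namespace OUaux

variable {m : ℕ} (g : Fin (m + 2) → Fin (m + 2) → ℝ)

/-- subdiagonal matrix -/
def E : Matrix (Fin (m + 2)) (Fin (m + 2)) ℝ :=
  Matrix.of fun i j => if (j : ℕ) + 1 = (i : ℕ) then g j i else 0

/-- unipotent lower bidiagonal -/
def U : Matrix (Fin (m + 2)) (Fin (m + 2)) ℝ := 1 - E g

/-- diagonal entries -/
def dvec : Fin (m + 2) → ℝ :=
  Fin.cases 1 (fun k => 1 - g k.castSucc k.succ ^ 2)

lemma E_mul_zero (A : Matrix (Fin (m + 2)) (Fin (m + 2)) ℝ) (l : Fin (m + 2)) :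
    (E g * A) 0 l = 0 := by
  rw [Matrix.mul_apply]
  apply Finset.sum_eq_zero
  intro j _
  simp [E]

lemma E_mul_succ (A : Matrix (Fin (m + 2)) (Fin (m + 2)) ℝ) (k : Fin (m + 1))
    (l : Fin (m + 2)) :
    (E g * A) k.succ l = g k.castSucc k.succ * A k.castSucc l := by
  rw [Matrix.mul_apply]
  rw [Finset.sum_eq_single k.castSucc]
  · simp [E]
  · intro j _ hj
    have : ¬ ((j : ℕ) + 1 = (k.succ : ℕ)) := by
      intro h
      apply hj
      apply Fin.ext
      simpa using Nat.succ_injective h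
    simp only [E, Matrix.of_apply, if_neg this, zero_mul]
  · simp

lemma mul_Et_zero (A : Matrix (Fin (m + 2)) (Fin (m + 2)) ℝ) (i : Fin (m + 2)) :
    (A * (E g)ᵀ) i 0 = 0 := by
  rw [Matrix.mul_apply]
  apply Finset.sum_eq_zero
  intro j _
  simp [E]

lemma mul_Et_succ (A : Matrix (Fin (m + 2)) (Fin (m + 2)) ℝ) (k : Fin (m + 1))
    (i : Fin (m + 2)) :
    (A * (E g)ᵀ) i k.succ = g k.castSucc k.succ * A i k.castSucc := by
  rw [Matrix.mul_apply]
  rw [Finset.sum_eq_single k.castSucc]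
  · simp [E]; ring
  · intro j _ hj
    have : ¬ ((j : ℕ) + 1 = (k.succ : ℕ)) := by
      intro h
      apply hj
      apply Fin.ext
      simpa using Nat.succ_injective h
    simp only [E, Matrix.transpose_apply, Matrix.of_apply, if_neg this, mul_zero]
  · simp


lemma key (hg1 : ∀ i, g i i = 1) (hgs : ∀ i j, g i j = g j i)
    (hgm : ∀ i j k : Fin (m + 2), i ≤ j → j ≤ k → g i k = g i j * g j k) :
    U g * Matrix.of g * (U g)ᵀ = Matrix.diagonal (dvec g) := by
  have expand : U g * Matrix.of g * (U g)ᵀ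
      = (Matrix.of g - E g * Matrix.of g)
        - (Matrix.of g - E g * Matrix.of g) * (E g)ᵀ := by
    rw [U, Matrix.sub_mul, Matrix.one_mul, Matrix.transpose_sub, Matrix.transpose_one,
      Matrix.mul_sub, Matrix.mul_one]
  rw [expand]
  ext i j
  have hc0 : ∀ x : Fin (m + 2), (0 : Fin (m+2)) ≤ x := fun x => Fin.zero_le x
  have hcs : ∀ k : Fin (m + 1), k.castSucc ≤ k.succ := fun k => (Fin.castSucc_lt_succ (i := k)).le
  induction i using Fin.cases with
  | zero =>
    induction j using Fin.cases with
    | zero =>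
      simp [Matrix.sub_apply, E_mul_zero, mul_Et_zero, hg1]
      simp [dvec]
    | succ l =>
      rw [Matrix.sub_apply, mul_Et_succ, Matrix.sub_apply, E_mul_zero,
        Matrix.sub_apply, E_mul_zero]
      have : g 0 l.succ = g 0 l.castSucc * g l.castSucc l.succ :=
        hgm _ _ _ (hc0 _) (hcs l)
      rw [Matrix.diagonal_apply_ne _ (Fin.succ_ne_zero l).symm]
      simp only [Matrix.of_apply, this]
      ring
  | succ k =>
    induction j using Fin.cases with
    | zero =>
      rw [Matrix.sub_apply, mul_Et_zero, Matrix.sub_apply, E_mul_succ]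
      have : g 0 k.succ = g 0 k.castSucc * g k.castSucc k.succ :=
        hgm _ _ _ (hc0 _) (hcs k)
      rw [Matrix.diagonal_apply_ne _ (Fin.succ_ne_zero k)]
      simp only [Matrix.of_apply, hgs k.succ 0, hgs k.castSucc 0, this]
      ring
    | succ l =>
      rw [Matrix.sub_apply, mul_Et_succ, Matrix.sub_apply, Matrix.sub_apply,
        E_mul_succ, E_mul_succ]
      simp only [Matrix.of_apply]
      rcases lt_trichotomy k l with hkl | hkl | hkl
      · have h1 : k.succ ≤ l.castSucc := by
          rw [Fin.le_def]; simp; omega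
        have e1 : g k.succ l.succ = g k.succ l.castSucc * g l.castSucc l.succ :=
          hgm _ _ _ h1 (hcs l)
        have e2 : g k.castSucc l.succ = g k.castSucc l.castSucc * g l.castSucc l.succ :=
          hgm _ _ _ (le_trans (hcs k) h1) (hcs l)
        rw [Matrix.diagonal_apply_ne _ (by simp [Fin.ext_iff]; omega)]
        rw [e1, e2]; ring
      · subst hkl
        rw [Matrix.diagonal_apply_eq]
        simp only [dvec, Fin.cases_succ]
        rw [hg1, hgs k.succ k.castSucc, hg1]
        ring
      · have h1 : l.succ ≤ k.castSucc := by
          rw [Fin.le_def]; simp; omega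
        have e1 : g k.succ l.succ = g k.castSucc l.succ * g k.castSucc k.succ := by
          rw [hgs k.succ l.succ, hgs k.castSucc l.succ,
            hgm _ _ _ h1 (hcs k)]
        have e2 : g k.succ l.castSucc = g k.castSucc l.castSucc * g k.castSucc k.succ := by
          rw [hgs k.succ l.castSucc, hgs k.castSucc l.castSucc,
            hgm _ _ _ (le_trans (hcs l) h1) (hcs k)]
        rw [Matrix.diagonal_apply_ne _ (by simp [Fin.ext_iff]; omega)]
        rw [e1, e2]; ring


lemma det_U : (U g).det = 1 := by
  have h : (U g).BlockTriangular OrderDual.toDual := by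
    intro i j hij
    have hij' : i < j := hij
    have h1 : i ≠ j := ne_of_lt hij'
    have h2 : ¬ ((j : ℕ) + 1 = (i : ℕ)) := by
      have := Fin.lt_def.mp hij'; omega
    simp [U, E, Matrix.one_apply, h1, h2]
  rw [Matrix.det_of_lowerTriangular _ h]
  apply Finset.prod_eq_one
  intro i _
  have : ¬ ((i : ℕ) + 1 = (i : ℕ)) := by omega
  simp [U, E, Matrix.one_apply, this]

lemma isUnit_det_U : IsUnit (U g).det := by rw [det_U]; exact isUnit_one

lemma det_G (hg1 : ∀ i, g i i = 1) (hgs : ∀ i j, g i j = g j i)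
    (hgm : ∀ i j k : Fin (m + 2), i ≤ j → j ≤ k → g i k = g i j * g j k) :
    (Matrix.of g).det = ∏ i, dvec g i := by
  have h := congrArg Matrix.det (key g hg1 hgs hgm)
  rw [Matrix.det_mul, Matrix.det_mul, Matrix.det_transpose, det_U, Matrix.det_diagonal] at h
  simpa using h

lemma inv_G (hg1 : ∀ i, g i i = 1) (hgs : ∀ i j, g i j = g j i)
    (hgm : ∀ i j k : Fin (m + 2), i ≤ j → j ≤ k → g i k = g i j * g j k)
    (hd : ∀ i, dvec g i ≠ 0) :
    (Matrix.of g)⁻¹ = (U g)ᵀ * (Matrix.diagonal (dvec g))⁻¹ * U g := by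
  apply Matrix.inv_eq_right_inv
  have hD : Matrix.diagonal (dvec g) * (Matrix.diagonal (dvec g))⁻¹ = 1 := by
    apply Matrix.mul_nonsing_inv
    rw [Matrix.det_diagonal]
    exact isUnit_iff_ne_zero.mpr (Finset.prod_ne_zero_iff.mpr fun i _ => hd i)
  have hU := isUnit_det_U g
  have step : U g * (Matrix.of g * ((U g)ᵀ * (Matrix.diagonal (dvec g))⁻¹ * U g))
      = U g := by
    calc U g * (Matrix.of g * ((U g)ᵀ * (Matrix.diagonal (dvec g))⁻¹ * U g))
        = (U g * Matrix.of g * (U g)ᵀ) * ((Matrix.diagonal (dvec g))⁻¹ * U g) := by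
          simp only [Matrix.mul_assoc]
      _ = Matrix.diagonal (dvec g) * (Matrix.diagonal (dvec g))⁻¹ * U g := by
          rw [key g hg1 hgs hgm, Matrix.mul_assoc]
      _ = U g := by rw [hD, Matrix.one_mul]
  have h3 := congrArg (fun X => (U g)⁻¹ * X) step
  simpa [← Matrix.mul_assoc, Matrix.nonsing_inv_mul _ hU] using h3

lemma E_mulVec_zero (ε : Fin (m + 2) → ℝ) : (E g *ᵥ ε) 0 = 0 := by
  show ∑ j, E g 0 j * ε j = 0
  apply Finset.sum_eq_zero
  intro j _
  simp [E]

lemma E_mulVec_succ (ε : Fin (m + 2) → ℝ) (k : Fin (m + 1)) :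
    (E g *ᵥ ε) k.succ = g k.castSucc k.succ * ε k.castSucc := by
  show ∑ j, E g k.succ j * ε j = _
  rw [Finset.sum_eq_single k.castSucc]
  · simp [E]
  · intro j _ hj
    have : ¬ ((j : ℕ) + 1 = (k.succ : ℕ)) := by
      intro h
      exact hj (Fin.ext (by simpa using Nat.succ_injective h))
    simp only [E, Matrix.of_apply, if_neg this, zero_mul]
  · simp

lemma quad (hg1 : ∀ i, g i i = 1) (hgs : ∀ i j, g i j = g j i)
    (hgm : ∀ i j k : Fin (m + 2), i ≤ j → j ≤ k → g i k = g i j * g j k)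
    (hd : ∀ i, dvec g i ≠ 0) (ε : Fin (m + 2) → ℝ) :
    ε ⬝ᵥ ((Matrix.of g)⁻¹ *ᵥ ε)
      = (ε 0) ^ 2 + ∑ k : Fin (m + 1),
          (ε k.succ - ε k.castSucc * g k.castSucc k.succ) ^ 2 /
            (1 - g k.castSucc k.succ ^ 2) := by
  rw [inv_G g hg1 hgs hgm hd]
  have hUε : ∀ i, (U g *ᵥ ε) i = ε i - (E g *ᵥ ε) i := by
    intro i
    rw [U, Matrix.sub_mulVec, Matrix.one_mulVec]
    rfl
  have hDinv : (Matrix.diagonal (dvec g))⁻¹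
      = Matrix.diagonal (fun i => (dvec g i)⁻¹) := by
    apply Matrix.inv_eq_right_inv
    rw [Matrix.diagonal_mul_diagonal]
    convert Matrix.diagonal_one with i
    exact mul_inv_cancel₀ (hd i)
  rw [← Matrix.mulVec_mulVec, ← Matrix.mulVec_mulVec, Matrix.dotProduct_mulVec,
    Matrix.vecMul_transpose, hDinv]
  have hdot : ∀ w : Fin (m + 2) → ℝ,
      (Matrix.diagonal (fun i => (dvec g i)⁻¹) *ᵥ w) = fun i => (dvec g i)⁻¹ * w i := by
    intro w; funext i; rw [Matrix.mulVec_diagonal]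
  rw [hdot]
  show ∑ i, (U g *ᵥ ε) i * ((dvec g i)⁻¹ * (U g *ᵥ ε) i) = _
  rw [Fin.sum_univ_succ]
  congr 1
  · rw [hUε, E_mulVec_zero]
    simp [dvec]
    ring
  · apply Finset.sum_congr rfl
    intro k _
    rw [hUε, E_mulVec_succ]
    simp only [dvec, Fin.cases_succ]
    rw [div_eq_mul_inv]
    ring

end OUaux

/-- The sum of one-dimensional Gaussian transition log-densities of the stationary OU process
equals the multivariate Gaussian log-density: for all `ε ∈ ℝⁿ` (`n = m + 2 ≥ 2`), with gaps
`Δ_i = t_{i+1} - t_i` and `Σ_{ij} = (σ²/(2φ))e^{-φ|t_i-t_j|}`,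
`-(n/2)log(πσ²/φ) - (1/2)Σᵢ log(1-e^{-2φΔᵢ}) - (φ/σ²)ε₁² - (φ/σ²)Σᵢ (ε_{i+1}-ε_i e^{-φΔᵢ})²/(1-e^{-2φΔᵢ})`
equals `-(n/2)log(2π) - (1/2)log det Σ - (1/2)εᵀΣ⁻¹ε`. -/
theorem OU_loglikelihood_equivalence
    (m : ℕ) (t : Fin (m + 2) → ℝ) (ht : StrictMono t)
    (φ σ : ℝ) (hφ : 0 < φ) (hσ : 0 < σ)
    (S : Matrix (Fin (m + 2)) (Fin (m + 2)) ℝ)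
    (hS : ∀ i j, S i j = σ ^ 2 / (2 * φ) * Real.exp (-φ * |t i - t j|))
    (ε : Fin (m + 2) → ℝ) :
    -(((m : ℝ) + 2) / 2) * Real.log (π * σ ^ 2 / φ)
      - (1 / 2) * ∑ i : Fin (m + 1),
          Real.log (1 - Real.exp (-2 * φ * (t i.succ - t i.castSucc)))
      - (φ / σ ^ 2) * (ε 0) ^ 2
      - (φ / σ ^ 2) * ∑ i : Fin (m + 1),
          (ε i.succ - ε i.castSucc * Real.exp (-φ * (t i.succ - t i.castSucc))) ^ 2 /
            (1 - Real.exp (-2 * φ * (t i.succ - t i.castSucc)))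
    = -(((m : ℝ) + 2) / 2) * Real.log (2 * π)
      - (1 / 2) * Real.log S.det
      - (1 / 2) * (ε ⬝ᵥ (S⁻¹ *ᵥ ε)) := by
  set g : Fin (m + 2) → Fin (m + 2) → ℝ :=
    fun i j => Real.exp (-φ * |t i - t j|) with hgdef
  have hg1 : ∀ i, g i i = 1 := by intro i; simp [hgdef]
  have hgs : ∀ i j, g i j = g j i := by intro i j; simp [hgdef, abs_sub_comm]
  have habs : ∀ a b : Fin (m + 2), a ≤ b → |t a - t b| = t b - t a := by
    intro a b hab
    rw [abs_sub_comm, abs_of_nonneg (sub_nonneg.mpr (ht.monotone hab))]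
  have hgm : ∀ i j k : Fin (m + 2), i ≤ j → j ≤ k → g i k = g i j * g j k := by
    intro i j k hij hjk
    simp only [hgdef]
    rw [habs _ _ hij, habs _ _ hjk, habs _ _ (le_trans hij hjk), ← Real.exp_add]
    congr 1; ring
  have hρ : ∀ k : Fin (m + 1),
      g k.castSucc k.succ = Real.exp (-φ * (t k.succ - t k.castSucc)) := by
    intro k
    simp only [hgdef]
    rw [habs _ _ (Fin.castSucc_lt_succ (i := k)).le]
  have hρpos : ∀ k : Fin (m + 1), 0 < g k.castSucc k.succ := by
    intro k; rw [hρ]; exact Real.exp_pos _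
  have hρlt : ∀ k : Fin (m + 1), g k.castSucc k.succ < 1 := by
    intro k; rw [hρ]
    apply Real.exp_lt_one_iff.mpr
    have := ht (Fin.castSucc_lt_succ (i := k))
    nlinarith
  have hd2 : ∀ k : Fin (m + 1), 0 < 1 - g k.castSucc k.succ ^ 2 := by
    intro k
    have h1 : g k.castSucc k.succ ^ 2 < 1 :=
      pow_lt_one₀ (hρpos k).le (hρlt k) two_ne_zero
    linarith
  have hd : ∀ i, OUaux.dvec g i ≠ 0 := by
    intro i
    induction i using Fin.cases with
    | zero => simp [OUaux.dvec]
    | succ k =>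
      simp only [OUaux.dvec, Fin.cases_succ]
      exact (hd2 k).ne'
  have hc : (0 : ℝ) < σ ^ 2 / (2 * φ) := by positivity
  have hSG : S = (σ ^ 2 / (2 * φ)) • Matrix.of g := by
    ext i j
    rw [hS]
    simp [hgdef]
  have hdetG : (Matrix.of g).det
      = ∏ k : Fin (m + 1), (1 - g k.castSucc k.succ ^ 2) := by
    rw [OUaux.det_G g hg1 hgs hgm, Fin.prod_univ_succ]
    simp [OUaux.dvec]
  have hdetGpos : 0 < (Matrix.of g).det := by
    rw [hdetG]; exact Finset.prod_pos fun k _ => hd2 k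
  have hGunit : IsUnit (Matrix.of g).det := isUnit_iff_ne_zero.mpr hdetGpos.ne'
  have hdetS : S.det = (σ ^ 2 / (2 * φ)) ^ (m + 2) * (Matrix.of g).det := by
    rw [hSG, Matrix.det_smul]
    simp
  have hSinv : S⁻¹ = (σ ^ 2 / (2 * φ))⁻¹ • (Matrix.of g)⁻¹ := by
    apply Matrix.inv_eq_right_inv
    rw [hSG, Matrix.smul_mul, Matrix.mul_smul, smul_smul,
      mul_inv_cancel₀ hc.ne', Matrix.mul_nonsing_inv _ hGunit, one_smul]
  have hquadS : ε ⬝ᵥ S⁻¹ *ᵥ ε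
      = (2 * φ / σ ^ 2) * ((ε 0) ^ 2 + ∑ k : Fin (m + 1),
          (ε k.succ - ε k.castSucc * g k.castSucc k.succ) ^ 2 /
            (1 - g k.castSucc k.succ ^ 2)) := by
    rw [hSinv, Matrix.smul_mulVec, dotProduct_smul,
      OUaux.quad g hg1 hgs hgm hd, smul_eq_mul, inv_div]
  have hlogdet : Real.log S.det
      = ((m : ℝ) + 2) * Real.log (σ ^ 2 / (2 * φ))
        + ∑ k : Fin (m + 1), Real.log (1 - g k.castSucc k.succ ^ 2) := by
    rw [hdetS, Real.log_mul (pow_ne_zero _ hc.ne') hdetGpos.ne', Real.log_pow,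
      hdetG, Real.log_prod (fun k _ => (hd2 k).ne')]
    push_cast
    ring
  have hsq : ∀ k : Fin (m + 1),
      Real.exp (-2 * φ * (t k.succ - t k.castSucc)) = g k.castSucc k.succ ^ 2 := by
    intro k
    rw [hρ, sq, ← Real.exp_add]
    congr 1; ring
  have hsum1 : ∑ i : Fin (m + 1),
      Real.log (1 - Real.exp (-2 * φ * (t i.succ - t i.castSucc)))
      = ∑ i : Fin (m + 1), Real.log (1 - g i.castSucc i.succ ^ 2) :=
    Finset.sum_congr rfl fun k _ => by rw [hsq]
  have hsum2 : ∑ i : Fin (m + 1),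
      (ε i.succ - ε i.castSucc * Real.exp (-φ * (t i.succ - t i.castSucc))) ^ 2 /
        (1 - Real.exp (-2 * φ * (t i.succ - t i.castSucc)))
      = ∑ i : Fin (m + 1),
          (ε i.succ - ε i.castSucc * g i.castSucc i.succ) ^ 2 /
            (1 - g i.castSucc i.succ ^ 2) :=
    Finset.sum_congr rfl fun k _ => by rw [hsq, hρ]
  have hlogc : Real.log (π * σ ^ 2 / φ)
      = Real.log (2 * π) + Real.log (σ ^ 2 / (2 * φ)) := by
    rw [← Real.log_mul (by positivity) hc.ne']
    congr 1
    field_simp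
  rw [hquadS, hlogdet, hsum1, hsum2, hlogc]
  have hσ2 : σ ^ 2 ≠ 0 := by positivity
  field_simp
  ring
end
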